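/- arXiv:2101.12271 — 2 statements merged into one kernel-verified Lean document; each statement's English description precedes it below -/
import Mathlib

section
/- Let γ be a numbering and let A, B ⊆ ℕ with A ≤_γ B. If γ is (2, B)-divisible, then A is Turing reducible to B (A ≤_T B). -/
open Nat Part

/-- Partial functions on `ℕ` computable relative to an oracle set `A`. -/
inductive RecursiveInSet (A : Set ℕ) : (ℕ →. ℕ) → Prop
  | zero : RecursiveInSet A (pure 0)
  | succ : RecursiveInSet A ↑Nat.succ
  | left : RecursiveInSet A ↑fun n : ℕ => n.unpair.1
  | right : RecursiveInSet A ↑fun n : ℕ => n.unpair.2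
  | oracle : RecursiveInSet A ↑fun n : ℕ => A.indicator 1 n
  | pair {f g} : RecursiveInSet A f → RecursiveInSet A g →
      RecursiveInSet A fun n => Nat.pair <$> f n <*> g n
  | comp {f g} : RecursiveInSet A f → RecursiveInSet A g →
      RecursiveInSet A fun n => g n >>= f
  | prec {f g} : RecursiveInSet A f → RecursiveInSet A g →
      RecursiveInSet A (Nat.unpaired fun a n =>
        n.rec (f a) fun y IH => do let i ← IH; g (Nat.pair a (Nat.pair y i)))
  | rfind {f} : RecursiveInSet A f →
      RecursiveInSet A fun a => Nat.rfind fun n => (fun m => m = 0) <$> f (Nat.pair a n)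

/-- A total function `f : ℕ → ℕ` is `A`-computable. -/
def ComputableInSet (A : Set ℕ) (f : ℕ → ℕ) : Prop :=
  RecursiveInSet A fun n => Part.some (f n)

/-- A total binary function is `A`-computable. -/
def ComputableInSet₂ (A : Set ℕ) (h : ℕ → ℕ → ℕ) : Prop :=
  ComputableInSet A fun n => h n.unpair.1 n.unpair.2

/-- The characteristic function of a set of naturals. -/
noncomputable def chi (A : Set ℕ) : ℕ → ℕ := A.indicator 1

/-- Turing reducibility: `A ≤_T B`. -/
def TuringLE (A B : Set ℕ) : Prop := ComputableInSet B (chi A)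

/-- `A` is computable. -/
def SetComputable (A : Set ℕ) : Prop := ComputableInSet ∅ (chi A)

/-- `X` is computably enumerable in `A`: `X` is the domain of a partial
`A`-computable function. -/
def CEIn (A : Set ℕ) (X : Set ℕ) : Prop :=
  ∃ p : ℕ →. ℕ, RecursiveInSet A p ∧ X = p.Dom

/-- `A ≤_γ B` (`A` is `(γ,B)`-low): every total `A`-computable function has a
`B`-computable `γ`-lift. -/
def GammaLE (γ : ℕ → ℕ → Prop) (A B : Set ℕ) : Prop :=
  ∀ f : ℕ → ℕ, ComputableInSet A f →
    ∃ g : ℕ → ℕ, ComputableInSet B g ∧ ∀ n, γ (f n) (g n)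

/-- `A` is `γ`-low: `A ≤_γ ∅`. -/
def GammaLow (γ : ℕ → ℕ → Prop) (A : Set ℕ) : Prop := GammaLE γ A ∅

/-- `γ` is `(n, A)`-divisible (for finite `n`). -/
def DivisibleFin (γ : ℕ → ℕ → Prop) (n : ℕ) (A : Set ℕ) : Prop :=
  ∃ (x : Fin n → ℕ) (X : Fin n → Set ℕ),
    (∀ i, CEIn A (X i)) ∧
    (∀ i, {m | γ (x i) m} ⊆ X i) ∧
    (∀ i j, i ≠ j → {m | γ (x i) m} ∩ X j = ∅)

/-- `γ` is `(ω, A)`-divisible. -/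
def DivisibleOmega (γ : ℕ → ℕ → Prop) (A : Set ℕ) : Prop :=
  ∃ (x : ℕ → ℕ) (X : ℕ → Set ℕ),
    ComputableInSet A x ∧
    CEIn A {k : ℕ | k.unpair.2 ∈ X k.unpair.1} ∧
    (∀ i, {m | γ (x i) m} ⊆ X i) ∧
    (∀ i j, i ≠ j → {m | γ (x i) m} ∩ X j = ∅)

/-- `γ` is `A`-precomplete: every partial `A`-computable function has a total
`A`-computable totalization modulo `γ`. -/
def PrecompleteIn (γ : ℕ → ℕ → Prop) (A : Set ℕ) : Prop :=
  ∀ ψ : ℕ →. ℕ, RecursiveInSet A ψ →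
    ∃ f : ℕ → ℕ, ComputableInSet A f ∧ ∀ n, ∀ y ∈ ψ n, γ y (f n)

/-- `γ` is a c.e. numbering. -/
def CENumbering (γ : ℕ → ℕ → Prop) : Prop :=
  CEIn ∅ {k : ℕ | γ k.unpair.1 k.unpair.2}

/-- The `e`-th partial computable function. -/
def phi (e : ℕ) : ℕ →. ℕ := (Denumerable.ofNat Nat.Partrec.Code e).eval

/-- The `e`-th computably enumerable set. -/
def Wset (e : ℕ) : Set ℕ := (phi e).Dom

/-- The halting set `∅'`. -/
def halting : Set ℕ := {e : ℕ | (phi e e).Dom}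

/-!
Take divisibility witnesses `x 0`, `x 1` with separating `B`-c.e. sets `X 0`, `X 1`. The map
`n ↦ x (χ_A n)` is `A`-computable, so it has a `B`-computable `γ`-lift `g`, and separation gives
`A = g⁻¹ (X 1)` and `Aᶜ = g⁻¹ (X 0)`. Both are therefore c.e. in `B`, and Post's theorem relative
to `B` yields `A ≤_T B`.

Relativized Post's theorem rests on the use principle: a `B`-recursive function is approximated by
a partial recursive function that reads only a finite prefix of `χ_B`. The oracle can then
dovetail over prefixes and step counts until one of the two enumerations accepts `n`.
-/

open Filter Encodable

theorem Part.mem_map_seq {α β γ : Type} (f : α → β → γ) (x : Part α) (y : Part β) (c : γ) :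
    c ∈ f <$> x <*> y ↔ ∃ a ∈ x, ∃ b ∈ y, f a b = c := by
  simp [Seq.seq]

-- The `oracle` constructor's `↑fun n => A.indicator 1 n` elaborates to an indicator with values
-- in `Part ℕ`.
theorem indicator_one_eq_some_chi (B : Set ℕ) (n : ℕ) :
    B.indicator (1 : ℕ → Part ℕ) n = Part.some (chi B n) := by
  by_cases h : n ∈ B <;> simp [chi, h] <;> rfl

def oracleTable (O : ℕ → ℕ) (s : ℕ) : List ℕ := (List.range s).map O

theorem getElem?_oracleTable (O : ℕ → ℕ) (s n : ℕ) :
    (oracleTable O s)[n]? = if n < s then Option.some (O n) else none := by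
  by_cases h : n < s <;> simp [oracleTable, h]

namespace RecursiveInSet

variable {B : Set ℕ}

theorem of_eq {f g : ℕ →. ℕ} (hf : RecursiveInSet B f) (H : ∀ n, f n = g n) :
    RecursiveInSet B g :=
  funext H ▸ hf

theorem of_partrec {f : ℕ →. ℕ} (hf : Nat.Partrec f) : RecursiveInSet B f := by
  induction hf with
  | zero => exact .zero
  | succ => exact .succ
  | left => exact .left
  | right => exact .right
  | pair _ _ ihf ihg => exact .pair ihf ihg
  | comp _ _ ihf ihg => exact .comp ihf ihg
  | prec _ _ ihf ihg => exact .prec ihf ihg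
  | rfind _ ih => exact .rfind ih

theorem comp_computableInSet {f : ℕ →. ℕ} {g : ℕ → ℕ} (hf : RecursiveInSet B f)
    (hg : ComputableInSet B g) : RecursiveInSet B fun n => f (g n) :=
  (hf.comp hg).of_eq fun _ => Part.bind_some _ _

end RecursiveInSet

namespace ComputableInSet

variable {B : Set ℕ}

theorem of_computable {f : ℕ → ℕ} (hf : Computable f) : ComputableInSet B f :=
  .of_partrec (Partrec.nat_iff.1 hf)

theorem chi_self (B : Set ℕ) : ComputableInSet B (chi B) :=
  RecursiveInSet.oracle.of_eq (indicator_one_eq_some_chi B)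

theorem of_mem {p : ℕ →. ℕ} {f : ℕ → ℕ} (hp : RecursiveInSet B p)
    (h : ∀ n, f n ∈ p n) : ComputableInSet B f :=
  hp.of_eq fun n => Part.eq_some_iff.2 (h n)

theorem comp {f g : ℕ → ℕ} (hf : ComputableInSet B f) (hg : ComputableInSet B g) :
    ComputableInSet B fun n => f (g n) :=
  RecursiveInSet.comp_computableInSet (f := fun n => Part.some (f n)) hf hg

theorem pair {f g : ℕ → ℕ} (hf : ComputableInSet B f) (hg : ComputableInSet B g) :
    ComputableInSet B fun n => Nat.pair (f n) (g n) :=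
  (RecursiveInSet.pair hf hg).of_eq fun _ => by simp [Seq.seq]

theorem comp₂ {h : ℕ → ℕ → ℕ} (hh : Computable₂ h) {f g : ℕ → ℕ}
    (hf : ComputableInSet B f) (hg : ComputableInSet B g) :
    ComputableInSet B fun n => h (f n) (g n) := by
  have hh' : Computable fun m : ℕ => h m.unpair.1 m.unpair.2 :=
    hh.comp (Computable.fst.comp .unpair) (Computable.snd.comp .unpair)
  simpa using (of_computable hh').comp (hf.pair hg)

theorem ite_mem (A : Set ℕ) [DecidablePred (· ∈ A)] (a b : ℕ) :
    ComputableInSet A fun n => if n ∈ A then a else b := by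
  have hsel : Computable fun k : ℕ => if k = 0 then b else a :=
    (Primrec.ite (Primrec.eq.comp Primrec.id (Primrec.const 0)) (Primrec.const b)
      (Primrec.const a)).to_comp
  refine ((of_computable hsel).comp (chi_self A)).of_eq fun n => ?_
  by_cases hn : n ∈ A <;> simp [chi, hn]

theorem nat_rec (x : ℕ) {h : ℕ → ℕ → ℕ} (hh : ComputableInSet₂ B h) :
    ComputableInSet B fun n => Nat.rec x (fun y IH => h y IH) n := by
  have hstep : ComputableInSet B fun m => h m.unpair.2.unpair.1 m.unpair.2.unpair.2 :=
    hh.comp (of_computable (Computable.snd.comp .unpair))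
  have hrec := (RecursiveInSet.prec (of_computable (Computable.const x)) hstep).comp_computableInSet
    ((of_computable (Computable.const 0)).pair (of_computable Computable.id))
  refine hrec.of_eq fun n => ?_
  simp only [Nat.unpaired, Nat.unpair_pair, id]
  induction n with
  | zero => rfl
  | succ n ih => exact (congrArg (· >>= fun i => Part.some (h n i)) ih).trans (Part.bind_some _ _)

theorem encode_oracleTable (B : Set ℕ) :
    ComputableInSet B fun s => encode (oracleTable (chi B) s) := by
  let snoc (b c : ℕ) : ℕ := encode ((decode (α := List ℕ) c).getD [] ++ [b])
  have hsnoc : Computable₂ snoc :=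
    Computable.encode.comp₂ <| Computable.list_concat.comp₂
      (Computable.option_getD (Computable.decode.comp .snd) (Computable.const [])) .fst
  have hstep : ComputableInSet₂ B fun y c => snoc (chi B y) c :=
    comp₂ hsnoc ((chi_self B).comp (of_computable (Computable.fst.comp .unpair)))
      (of_computable (Computable.snd.comp .unpair))
  refine (nat_rec (encode ([] : List ℕ)) hstep).of_eq fun s => congrArg Part.some ?_
  induction s with
  | zero => rfl
  | succ s ih =>
    beta_reduce at ih ⊢
    change snoc (chi B s) (Nat.rec _ _ s) = _
    rw [ih]
    simp [snoc, oracleTable, List.range_succ]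

theorem comp_oracleTable {F : ℕ → List ℕ → ℕ} (hF : Computable₂ F) {g : ℕ → ℕ}
    (hg : Computable g) : ComputableInSet B fun n => F n (oracleTable (chi B) (g n)) := by
  have hF' : Computable₂ fun n c => F n ((decode (α := List ℕ) c).getD []) :=
    hF.comp₂ .fst (Computable.option_getD (Computable.decode.comp .snd) (Computable.const []))
  simpa using
    comp₂ hF' (of_computable Computable.id) ((encode_oracleTable B).comp (of_computable hg))

theorem of_search {B : Set ℕ} {D E f : ℕ → ℕ} (hD : ComputableInSet B D)
    (hE : ComputableInSet B E) (hex : ∀ n, ∃ j, D (Nat.pair n j) = 0)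
    (hf : ∀ n j, D (Nat.pair n j) = 0 → E (Nat.pair n j) = f n) : ComputableInSet B f := by
  refine .of_mem (RecursiveInSet.comp hE (RecursiveInSet.pair (g := fun n => Nat.rfind fun j =>
    (fun m => decide (m = 0)) <$> Part.some (D (Nat.pair n j))) (of_computable Computable.id)
    (RecursiveInSet.rfind hD))) fun n => ?_
  obtain ⟨j, hj⟩ := hex n
  obtain ⟨j₀, hj₀, -⟩ := Nat.rfind_min' (p := fun j => decide (D (Nat.pair n j) = 0))
    (decide_eq_true hj)
  have hD₀ : D (Nat.pair n j₀) = 0 := by simpa using Nat.rfind_spec hj₀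
  refine Part.mem_bind_iff.2 ⟨Nat.pair n j₀, (Part.mem_map_seq _ _ _ _).2
    ⟨n, Part.mem_some n, j₀, hj₀, rfl⟩, ?_⟩
  simp [hf n j₀ hD₀]

end ComputableInSet

-- The use principle: `q n l` evaluates `p n` while reading the oracle `O` only through the
-- finite table `l`.
structure IsPrefixApprox {α : Type} (O : ℕ → ℕ) (p : ℕ →. α) (q : ℕ → List ℕ →. α) : Prop where
  sound {n s a} : a ∈ q n (oracleTable O s) → a ∈ p n
  eventually_mem {n a} : a ∈ p n → ∀ᶠ s in atTop, a ∈ q n (oracleTable O s)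

namespace IsPrefixApprox

variable {α β : Type} {O : ℕ → ℕ}

theorem self (O : ℕ → ℕ) (p : ℕ →. α) : IsPrefixApprox O p fun n _ => p n :=
  ⟨id, fun h => .of_forall fun _ => h⟩

theorem oracle (O : ℕ → ℕ) :
    IsPrefixApprox O (fun n => Part.some (O n)) fun n l => l[n]? where
  sound {n s a} h := by
    rw [getElem?_oracleTable] at h
    split_ifs at h <;> simp_all
  eventually_mem {n a} h := (eventually_gt_atTop n).mono fun s hs => by
    simp_all [getElem?_oracleTable]

theorem map {p : ℕ →. α} {q : ℕ → List ℕ →. α} (h : IsPrefixApprox O p q) (e : α → β) :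
    IsPrefixApprox O (fun n => e <$> p n) fun n l => e <$> q n l where
  sound {n s b} hb := by
    obtain ⟨a, ha, rfl⟩ := (Part.mem_map_iff _).1 hb
    exact Part.mem_map _ (h.sound ha)
  eventually_mem {n b} hb := by
    obtain ⟨a, ha, rfl⟩ := (Part.mem_map_iff _).1 hb
    exact (h.eventually_mem ha).mono fun s hs => Part.mem_map _ hs

theorem bind {g : ℕ →. ℕ} {qg : ℕ → List ℕ →. ℕ} {f : ℕ →. α} {qf : ℕ → List ℕ →. α}
    (hg : IsPrefixApprox O g qg) (hf : IsPrefixApprox O f qf) :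
    IsPrefixApprox O (fun n => g n >>= f) fun n l => qg n l >>= fun u => qf u l where
  sound {n s a} ha := by
    obtain ⟨u, hu, ha⟩ := Part.mem_bind_iff.1 ha
    exact Part.mem_bind_iff.2 ⟨u, hg.sound hu, hf.sound ha⟩
  eventually_mem {n a} ha := by
    obtain ⟨u, hu, ha⟩ := Part.mem_bind_iff.1 ha
    exact ((hg.eventually_mem hu).and (hf.eventually_mem ha)).mono fun s hs =>
      Part.mem_bind_iff.2 ⟨u, hs⟩

theorem pair {f g : ℕ →. ℕ} {qf qg : ℕ → List ℕ →. ℕ}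
    (hf : IsPrefixApprox O f qf) (hg : IsPrefixApprox O g qg) :
    IsPrefixApprox O (fun n => Nat.pair <$> f n <*> g n)
      fun n l => Nat.pair <$> qf n l <*> qg n l where
  sound {n s a} ha := by
    obtain ⟨u, hu, v, hv, rfl⟩ := (Part.mem_map_seq _ _ _ _).1 ha
    exact (Part.mem_map_seq _ _ _ _).2 ⟨u, hf.sound hu, v, hg.sound hv, rfl⟩
  eventually_mem {n a} ha := by
    obtain ⟨u, hu, v, hv, rfl⟩ := (Part.mem_map_seq _ _ _ _).1 ha
    exact ((hf.eventually_mem hu).and (hg.eventually_mem hv)).mono fun s hs =>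
      (Part.mem_map_seq _ _ _ _).2 ⟨u, hs.1, v, hs.2, rfl⟩

theorem prec {f g : ℕ →. ℕ} {qf qg : ℕ → List ℕ →. ℕ}
    (hf : IsPrefixApprox O f qf) (hg : IsPrefixApprox O g qg) :
    IsPrefixApprox O
      (Nat.unpaired fun a n =>
        n.rec (f a) fun y IH => do let i ← IH; g (Nat.pair a (Nat.pair y i)))
      fun k l => k.unpair.2.rec (qf k.unpair.1 l) fun y IH => do
        let i ← IH; qg (Nat.pair k.unpair.1 (Nat.pair y i)) l where
  sound {k s} := by
    simp only [Nat.unpaired]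
    induction k.unpair.2 with
    | zero => exact hf.sound
    | succ n ih =>
      intro a ha
      obtain ⟨i, hi, ha⟩ := Part.mem_bind_iff.1 ha
      exact Part.mem_bind_iff.2 ⟨i, ih hi, hg.sound ha⟩
  eventually_mem {k} := by
    simp only [Nat.unpaired]
    induction k.unpair.2 with
    | zero => exact hf.eventually_mem
    | succ n ih =>
      intro a ha
      obtain ⟨i, hi, ha⟩ := Part.mem_bind_iff.1 ha
      exact ((ih hi).and (hg.eventually_mem ha)).mono fun s hs => Part.mem_bind_iff.2 ⟨i, hs⟩

theorem rfind {P : ℕ →. Bool} {Q : ℕ → List ℕ →. Bool} (h : IsPrefixApprox O P Q) :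
    IsPrefixApprox O (fun a => Nat.rfind fun j => P (Nat.pair a j))
      fun a l => Nat.rfind fun j => Q (Nat.pair a j) l where
  sound {a s m} hm := by
    obtain ⟨htrue, hfalse⟩ := Nat.mem_rfind.1 hm
    exact Nat.mem_rfind.2 ⟨h.sound htrue, fun hk => h.sound (hfalse hk)⟩
  eventually_mem {a m} hm := by
    obtain ⟨htrue, hfalse⟩ := Nat.mem_rfind.1 hm
    have hbefore : ∀ᶠ s in atTop, ∀ k ∈ Set.Iio m, false ∈ Q (Nat.pair a k) (oracleTable O s) :=
      (eventually_all_finite (Set.finite_Iio m)).2 fun k hk => h.eventually_mem (hfalse hk)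
    exact ((h.eventually_mem htrue).and hbefore).mono fun s hs =>
      Nat.mem_rfind.2 ⟨hs.1, fun hk => hs.2 _ hk⟩

theorem dom_iff {p : ℕ →. α} {q : ℕ → List ℕ →. α}
    (h : IsPrefixApprox O p q) (n : ℕ) : (p n).Dom ↔ ∃ s, (q n (oracleTable O s)).Dom := by
  simp only [Part.dom_iff_mem]
  constructor
  · rintro ⟨a, ha⟩
    obtain ⟨s, hs⟩ := (h.eventually_mem ha).exists
    exact ⟨s, a, hs⟩
  · rintro ⟨s, a, ha⟩
    exact ⟨a, h.sound ha⟩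

end IsPrefixApprox

theorem RecursiveInSet.exists_isPrefixApprox {B : Set ℕ} {p : ℕ →. ℕ} (hp : RecursiveInSet B p) :
    ∃ q : ℕ → List ℕ →. ℕ, Partrec₂ q ∧ IsPrefixApprox (chi B) p q := by
  have of_partrec {p : ℕ →. ℕ} (hp : Nat.Partrec p) :
      ∃ q : ℕ → List ℕ →. ℕ, Partrec₂ q ∧ IsPrefixApprox (chi B) p q :=
    ⟨fun n _ => p n, (Partrec.nat_iff.2 hp).comp .fst, .self _ _⟩
  have hpair : Computable₂ Nat.pair := Primrec₂.natPair.to_comp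
  induction hp with
  | zero => exact of_partrec .zero
  | succ => exact of_partrec .succ
  | left => exact of_partrec .left
  | right => exact of_partrec .right
  | oracle =>
    refine ⟨fun n l => l[n]?, (Computable.list_getElem?.comp .snd .fst).ofOption, ?_⟩
    simpa only [indicator_one_eq_some_chi] using IsPrefixApprox.oracle (chi B)
  | pair _ _ ihf ihg =>
    obtain ⟨qf, hqf, hf⟩ := ihf
    obtain ⟨qg, hqg, hg⟩ := ihg
    have hqg' : Partrec₂ fun (x : ℕ × List ℕ) (u : ℕ) => (qg x.1 x.2).map (Nat.pair u) :=
      Partrec.map (hqg.comp (Computable.fst.comp .fst) (Computable.snd.comp .fst))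
        (hpair.comp (Computable.snd.comp .fst) .snd)
    refine ⟨_, (hqf.bind hqg').of_eq fun x => ?_, hf.pair hg⟩
    ext c
    simp only [Part.mem_map_seq, Part.mem_bind_iff, Part.mem_map_iff]
  | comp _ _ ihf ihg =>
    obtain ⟨qf, hqf, hf⟩ := ihf
    obtain ⟨qg, hqg, hg⟩ := ihg
    exact ⟨fun n l => qg n l >>= fun u => qf u l,
      hqg.bind (hqf.comp .snd (Computable.snd.comp .fst)).to₂, hg.bind hf⟩
  | prec _ _ ihf ihg =>
    obtain ⟨qf, hqf, hf⟩ := ihf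
    obtain ⟨qg, hqg, hg⟩ := ihg
    refine ⟨_, ?_, hf.prec hg⟩
    have ha : Computable fun x : ℕ × List ℕ => x.1.unpair.1 :=
      Computable.fst.comp (Computable.unpair.comp .fst)
    exact Partrec.nat_rec (Computable.snd.comp (Computable.unpair.comp .fst))
      (hqf.comp ha .snd)
      (hqg.comp (hpair.comp (ha.comp .fst) (hpair.comp (Computable.fst.comp .snd)
        (Computable.snd.comp .snd))) (Computable.snd.comp .fst)).to₂
  | rfind _ ihf =>
    obtain ⟨qf, hqf, hf⟩ := ihf
    refine ⟨_, ?_, (hf.map fun m => decide (m = 0)).rfind⟩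
    refine Partrec.rfind (Partrec.map (hqf.comp (hpair.comp (Computable.fst.comp .fst) .snd)
      (Computable.snd.comp .fst)) ?_)
    exact (Primrec.eq.comp Primrec.snd (Primrec.const 0)).decide.to_comp

open Nat.Partrec (Code) in
theorem Partrec.exists_code_dom_iff {α σ : Type*} [Primcodable α] [Primcodable σ] {f : α →. σ}
    (hf : Partrec f) :
    ∃ c : Code, ∀ a, (f a).Dom ↔ ∃ k, (c.evaln k (encode a)).isSome := by
  obtain ⟨c, hc⟩ := Code.exists_code.1 hf
  refine ⟨c, fun a => ?_⟩
  have hdom : (f a).Dom ↔ (c.eval (encode a)).Dom := by simp [hc]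
  rw [hdom, Part.dom_iff_mem]
  simp only [Code.evaln_complete, Option.isSome_iff_exists, Option.mem_def]
  exact exists_comm

theorem CEIn.exists_computable_approx {B X : Set ℕ} (h : CEIn B X) :
    ∃ T : ℕ × List ℕ → ℕ → Bool, Computable₂ T ∧
      ∀ n, n ∈ X ↔ ∃ s k, T (n, oracleTable (chi B) s) k := by
  obtain ⟨p, hp, rfl⟩ := h
  obtain ⟨q, hq, hpq⟩ := hp.exists_isPrefixApprox
  obtain ⟨c, hc⟩ := Partrec.exists_code_dom_iff hq
  refine ⟨fun x k => (c.evaln k (encode x)).isSome, ?_, fun n => ?_⟩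
  · exact Primrec.option_isSome.to_comp.comp <| Nat.Partrec.Code.primrec_evaln.to_comp.comp
      ((Computable.snd.pair (Computable.const c)).pair (Computable.encode.comp .fst))
  · change (p n).Dom ↔ _
    simp only [hpq.dom_iff, fun s => hc (n, oracleTable (chi B) s)]

theorem CEIn.preimage {B X : Set ℕ} {g : ℕ → ℕ} (hX : CEIn B X) (hg : ComputableInSet B g) :
    CEIn B (g ⁻¹' X) := by
  obtain ⟨p, hp, rfl⟩ := hX
  exact ⟨fun n => p (g n), hp.comp_computableInSet hg, rfl⟩

theorem turingLE_of_ceIn_of_ceIn_compl {A B : Set ℕ} (h₁ : CEIn B A) (h₀ : CEIn B Aᶜ) :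
    TuringLE A B := by
  obtain ⟨T₁, hT₁, hA⟩ := h₁.exists_computable_approx
  obtain ⟨T₀, hT₀, hAc⟩ := h₀.exists_computable_approx
  -- a search index `x` codes a triple `⟨n, s, k⟩`
  let probe (T : ℕ × List ℕ → ℕ → Bool) (x : ℕ) (l : List ℕ) : Bool :=
    T (x.unpair.1, l) x.unpair.2.unpair.2
  have hprobe {T : ℕ × List ℕ → ℕ → Bool} (hT : Computable₂ T) : Computable₂ (probe T) :=
    hT.comp (Computable.pair (Computable.fst.comp (Computable.unpair.comp .fst)) .snd)
      ((Computable.snd.comp .unpair).comp ((Computable.snd.comp .unpair).comp .fst))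
  have hs : Computable fun x : ℕ => x.unpair.2.unpair.1 :=
    (Computable.fst.comp .unpair).comp (Computable.snd.comp .unpair)
  refine ComputableInSet.of_search
    (D := fun x => bif probe T₁ x (oracleTable (chi B) x.unpair.2.unpair.1) ||
      probe T₀ x (oracleTable (chi B) x.unpair.2.unpair.1) then 0 else 1)
    (E := fun x => bif probe T₁ x (oracleTable (chi B) x.unpair.2.unpair.1) then 1 else 0)
    (ComputableInSet.comp_oracleTable (Computable.cond
      (Primrec.or.to_comp.comp (hprobe hT₁) (hprobe hT₀))
      (Computable.const 0) (Computable.const 1)).to₂ hs)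
    (ComputableInSet.comp_oracleTable (Computable.cond (hprobe hT₁)
      (Computable.const 1) (Computable.const 0)).to₂ hs) (fun n => ?_) (fun n j hj => ?_)
  · by_cases hn : n ∈ A
    · obtain ⟨s, k, hsk⟩ := (hA n).1 hn
      exact ⟨Nat.pair s k, by simp [probe, hsk]⟩
    · obtain ⟨s, k, hsk⟩ := (hAc n).1 hn
      exact ⟨Nat.pair s k, by simp [probe, hsk]⟩
  · simp only [probe, Nat.unpair_pair] at hj ⊢
    cases h : T₁ (n, oracleTable (chi B) j.unpair.1) j.unpair.2
    · have hn : n ∉ A := (hAc n).2 ⟨_, _, by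
        cases h₀ : T₀ (n, oracleTable (chi B) j.unpair.1) j.unpair.2 <;> simp_all⟩
      simp [chi, hn]
    · have hn : n ∈ A := (hA n).2 ⟨_, _, h⟩
      simp [chi, hn]

theorem preimage_separator_eq {γ : ℕ → ℕ → Prop} {k : ℕ} {x : Fin k → ℕ} {X : Fin k → Set ℕ}
    (hsub : ∀ i, {m | γ (x i) m} ⊆ X i) (hdisj : ∀ i j, i ≠ j → {m | γ (x i) m} ∩ X j = ∅)
    {ℓ : ℕ → Fin k} {g : ℕ → ℕ} (hg : ∀ n, γ (x (ℓ n)) (g n)) (i : Fin k) :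
    g ⁻¹' X i = ℓ ⁻¹' {i} := by
  ext n
  refine ⟨fun hn => ?_, fun hn => hn ▸ hsub _ (hg n)⟩
  by_contra hne
  exact (hdisj _ i hne).subset ⟨hg n, hn⟩

theorem turingLE_of_gammaLE_of_divisible_general (γ : ℕ → ℕ → Prop)
    (A B : Set ℕ) (h : GammaLE γ A B) (hdiv : DivisibleFin γ 2 B) :
    TuringLE A B := by
  classical
  obtain ⟨x, X, hce, hsub, hdisj⟩ := hdiv
  let ℓ : ℕ → Fin 2 := fun n => if n ∈ A then 1 else 0
  obtain ⟨g, hg, hxg⟩ := h (fun n => x (ℓ n)) <| by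
    simpa only [ℓ, apply_ite] using ComputableInSet.ite_mem A (x 1) (x 0)
  have hfiber := preimage_separator_eq hsub hdisj hxg
  apply turingLE_of_ceIn_of_ceIn_compl
  · have hA : g ⁻¹' X 1 = A := by ext n; by_cases hn : n ∈ A <;> simp [hfiber, ℓ, hn]
    exact hA ▸ (hce 1).preimage hg
  · have hA : g ⁻¹' X 0 = Aᶜ := by ext n; by_cases hn : n ∈ A <;> simp [hfiber, ℓ, hn]
    exact hA ▸ (hce 0).preimage hg

/-- If `A ≤_γ B` and `γ` is `(2, B)`-divisible, then `A ≤_T B`. -/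
theorem turingLE_of_gammaLE_of_divisible (γ : ℕ → ℕ → Prop) (hγ : Equivalence γ)
    (A B : Set ℕ) (h : GammaLE γ A B) (hdiv : DivisibleFin γ 2 B) :
    TuringLE A B :=
  turingLE_of_gammaLE_of_divisible_general γ A B h hdiv
end

section
/- There exists a c.e. numbering γ (i.e. a computably enumerable equivalence relation on ℕ) with infinitely many equivalence classes that is not ω-divisible, i.e. not (ω, ∅)-divisible. -/
open Nat Part

/-! Collapse a simple set `S` to a single class. Since `S` is c.e., so is the resulting
equivalence, and since `Sᶜ` is infinite it has infinitely many classes. A computable sequence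
witnessing `ω`-divisibility would be injective and meet `S` at most once, so the rest of its range
would be an infinite c.e. set disjoint from `S`, contradicting simplicity. Post's construction
provides a simple set. -/

open Nat.Partrec.Code

theorem recursiveInSet_empty_iff {f : ℕ →. ℕ} : RecursiveInSet ∅ f ↔ Nat.Partrec f := by
  refine ⟨fun h => ?_, fun h => ?_⟩
  · induction h with
    | zero => exact .zero
    | succ => exact .succ
    | left => exact .left
    | right => exact .right
    | oracle => exact Nat.Partrec.zero.of_eq fun n => by simp; rfl
    | pair _ _ ihf ihg => exact .pair ihf ihg
    | comp _ _ ihf ihg => exact .comp ihf ihg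
    | prec _ _ ihf ihg => exact .prec ihf ihg
    | rfind _ ih => exact .rfind ih
  · induction h with
    | zero => exact .zero
    | succ => exact .succ
    | left => exact .left
    | right => exact .right
    | pair _ _ ihf ihg => exact .pair ihf ihg
    | comp _ _ ihf ihg => exact .comp ihf ihg
    | prec _ _ ihf ihg => exact .prec ihf ihg
    | rfind _ ih => exact .rfind ih

theorem computable_of_computableInSet_empty {f : ℕ → ℕ} (hf : ComputableInSet ∅ f) :
    Computable f :=
  Partrec.nat_iff.2 (recursiveInSet_empty_iff.1 hf)

theorem ceIn_empty_iff {X : Set ℕ} : CEIn ∅ X ↔ ∃ p : ℕ →. ℕ, Partrec p ∧ X = p.Dom := by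
  simp only [CEIn, recursiveInSet_empty_iff, Partrec.nat_iff]

theorem ceIn_empty_of_computable₂ {f : ℕ → ℕ → Bool} (hf : Computable₂ f) :
    CEIn ∅ {a | ∃ n, f a n = true} := by
  refine ceIn_empty_iff.2 ⟨fun a => Nat.rfind fun n => Part.some (f a n),
    Partrec.rfind hf.partrec₂, ?_⟩
  ext a
  exact ⟨fun ⟨n, hn⟩ => ⟨n, by simp [hn], fun {_} _ => trivial⟩,
    fun ⟨n, hn⟩ => ⟨n, (Part.mem_some_iff.1 hn.1).symm⟩⟩

theorem Nat.Partrec.Code.eval_dom_iff_exists_evaln {c : Code} {a : ℕ} :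
    (c.eval a).Dom ↔ ∃ s, (c.evaln s a).isSome := by
  simp only [Part.dom_iff_mem, evaln_complete, Option.isSome_iff_exists, Option.mem_def]
  exact ⟨fun ⟨_, s, h⟩ => ⟨s, _, h⟩, fun ⟨s, y, h⟩ => ⟨y, s, h⟩⟩

theorem exists_computable₂_of_ceIn_empty {X : Set ℕ} (hX : CEIn ∅ X) :
    ∃ f : ℕ → ℕ → Bool, Computable₂ f ∧ X = {a | ∃ n, f a n = true} := by
  obtain ⟨p, hp, rfl⟩ := ceIn_empty_iff.1 hX
  obtain ⟨c, rfl⟩ := exists_code.1 (Partrec.nat_iff.1 hp)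
  refine ⟨fun a s => (c.evaln s a).isSome, ?_, ?_⟩
  · exact (Primrec.option_isSome.comp <| primrec_evaln.comp <|
      (Primrec.snd.pair (Primrec.const c)).pair Primrec.fst).to_comp
  · ext a
    exact eval_dom_iff_exists_evaln

theorem ceIn_empty_setOf_exists_mem {ψ : ℕ →. ℕ} (hψ : Partrec ψ) :
    CEIn ∅ {m | ∃ e, m ∈ ψ e} := by
  obtain ⟨c, rfl⟩ := exists_code.1 (Partrec.nat_iff.1 hψ)
  convert ceIn_empty_of_computable₂
    (f := fun m n => decide (c.evaln n.unpair.2 n.unpair.1 = Option.some m)) ?_ using 1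
  · ext m
    simp only [Set.mem_ofPred_eq, evaln_complete, Option.mem_def, decide_eq_true_eq]
    refine ⟨fun ⟨e, s, h⟩ => ⟨Nat.pair e s, by simpa using h⟩,
      fun ⟨n, h⟩ => ⟨n.unpair.1, n.unpair.2, h⟩⟩
  · exact (Primrec.eq.decide.comp (primrec_evaln.comp <|
      ((Primrec.snd.comp <| Primrec.unpair.comp Primrec.snd).pair (Primrec.const c)).pair
        (Primrec.fst.comp <| Primrec.unpair.comp Primrec.snd))
      (Primrec.option_some.comp Primrec.fst)).to_comp

theorem ceIn_empty_image_compl_singleton {x : ℕ → ℕ} (hx : Computable x) (i₀ : ℕ) :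
    CEIn ∅ (x '' {i₀}ᶜ) := by
  convert ceIn_empty_of_computable₂ (f := fun m i => x i == m && !(i == i₀)) ?_ using 1
  · ext m
    simp [and_comm]
  · exact (Primrec.and.to_comp.comp
      (Primrec.beq.to_comp.comp (hx.comp Computable.snd) Computable.fst)
      (Primrec.not.comp <| Primrec.beq.comp Primrec.snd (Primrec.const i₀)).to_comp).to₂

theorem exists_eq_wset_of_ceIn_empty {X : Set ℕ} (hX : CEIn ∅ X) : ∃ e, X = Wset e := by
  obtain ⟨p, hp, rfl⟩ := ceIn_empty_iff.1 hX
  obtain ⟨c, rfl⟩ := exists_code.1 (Partrec.nat_iff.1 hp)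
  exact ⟨Encodable.encode c, by simp [Wset, phi]⟩

def IsSimpleSet (S : Set ℕ) : Prop :=
  CEIn ∅ S ∧ Sᶜ.Infinite ∧ ∀ X, CEIn ∅ X → X.Infinite → (S ∩ X).Nonempty

/-- `n` codes a pair `(m, s)`: the `e`-th program halts on some `m > 2e` within `s` steps. -/
def postSearch (e n : ℕ) : Bool :=
  decide (2 * e < n.unpair.1) &&
    (evaln n.unpair.2 (Denumerable.ofNat Nat.Partrec.Code e) n.unpair.1).isSome

theorem primrec₂_postSearch : Primrec₂ postSearch :=
  Primrec.and.comp₂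
    (Primrec.nat_lt.comp (Primrec.nat_double.comp Primrec.fst)
      ((Primrec.fst.comp Primrec.unpair).comp Primrec.snd)).decide
    (Primrec.option_isSome.comp <| primrec_evaln.comp <|
      (((Primrec.snd.comp Primrec.unpair).comp Primrec.snd).pair
        ((Primrec.ofNat _).comp Primrec.fst)).pair
        ((Primrec.fst.comp Primrec.unpair).comp Primrec.snd))

def postChoice (e : ℕ) : Part ℕ :=
  (Nat.rfind fun n => Part.some (postSearch e n)).map fun n => n.unpair.1

theorem partrec_postChoice : Partrec postChoice :=
  (Partrec.rfind primrec₂_postSearch.to_comp.partrec₂).map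
    (Primrec.fst.comp <| Primrec.unpair.comp Primrec.snd).to_comp

theorem lt_and_mem_wset_of_mem_postChoice {e m : ℕ} (h : m ∈ postChoice e) :
    2 * e < m ∧ m ∈ Wset e := by
  obtain ⟨n, hn, rfl⟩ := Part.mem_map_iff _ |>.1 h
  have hsearch : postSearch e n = true := Part.mem_some_iff.1 (Nat.rfind_spec hn) |>.symm
  simp only [postSearch, Bool.and_eq_true, decide_eq_true_eq] at hsearch
  exact ⟨hsearch.1, eval_dom_iff_exists_evaln.2 ⟨_, hsearch.2⟩⟩

theorem postChoice_dom {e m : ℕ} (hm : 2 * e < m) (hW : m ∈ Wset e) : (postChoice e).Dom := by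
  obtain ⟨s, hs⟩ := eval_dom_iff_exists_evaln.1 hW
  have hsearch : postSearch e (Nat.pair m s) = true := by
    simpa [postSearch] using ⟨hm, hs⟩
  exact ⟨Nat.pair m s, by simp [hsearch], fun {_} _ => trivial⟩

def postSet : Set ℕ := {m | ∃ e, m ∈ postChoice e}

/-- Only `e < N` can produce values below `2N + 1`, so at most `N` of those `2N + 1` numbers
lie in the range. -/
theorem infinite_compl_setOf_exists_mem {ψ : ℕ →. ℕ} (h : ∀ e m, m ∈ ψ e → 2 * e < m) :
    {m | ∃ e, m ∈ ψ e}ᶜ.Infinite := by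
  classical
  set S := {m | ∃ e, m ∈ ψ e}
  have hcount (N : ℕ) : ((Finset.range (2 * N + 1)).filter (· ∈ S)).card ≤ N := by
    calc _ ≤ ((Finset.range N).image fun e => (ψ e).toOption.getD 0).card := by
          refine Finset.card_le_card fun m hm => ?_
          obtain ⟨hm, e, he⟩ := Finset.mem_filter.1 hm
          have := h e m he
          have := Finset.mem_range.1 hm
          refine Finset.mem_image.2 ⟨e, Finset.mem_range.2 (by omega), ?_⟩
          rw [(Part.mem_toOption.2 he : (ψ e).toOption = Option.some m), Option.getD_some]
      _ ≤ N := Finset.card_image_le.trans (Finset.card_range N).le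
  intro hfin
  set N := hfin.toFinset.card
  have hcompl : ((Finset.range (2 * N + 1)).filter (· ∉ S)).card ≤ N :=
    Finset.card_le_card fun m hm => hfin.mem_toFinset.2 (Finset.mem_filter.1 hm).2
  have htotal := Finset.card_filter_add_card_filter_not (s := Finset.range (2 * N + 1)) (· ∈ S)
  have := hcount N
  simp only [Finset.card_range] at htotal
  omega

theorem isSimpleSet_postSet : IsSimpleSet postSet := by
  refine ⟨ceIn_empty_setOf_exists_mem partrec_postChoice,
    infinite_compl_setOf_exists_mem fun _ _ h => (lt_and_mem_wset_of_mem_postChoice h).1,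
    fun X hX hinf => ?_⟩
  obtain ⟨e, rfl⟩ := exists_eq_wset_of_ceIn_empty hX
  obtain ⟨m, hm, hlt⟩ := hinf.exists_gt (2 * e)
  obtain ⟨m', hm'⟩ := Part.dom_iff_mem.1 (postChoice_dom hlt hm)
  exact ⟨m', ⟨e, hm'⟩, (lt_and_mem_wset_of_mem_postChoice hm').2⟩

def collapse (S : Set ℕ) (a b : ℕ) : Prop := a = b ∨ a ∈ S ∧ b ∈ S

theorem collapse_refl (S : Set ℕ) (a : ℕ) : collapse S a a := Or.inl rfl

theorem collapse_equivalence (S : Set ℕ) : Equivalence (collapse S) where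
  refl := collapse_refl S
  symm := by
    rintro a b (rfl | ⟨ha, hb⟩)
    exacts [Or.inl rfl, Or.inr ⟨hb, ha⟩]
  trans := by
    rintro a b c (rfl | ⟨ha, hb⟩) (rfl | ⟨hb', hc⟩)
    exacts [Or.inl rfl, Or.inr ⟨hb', hc⟩, Or.inr ⟨ha, hb⟩, Or.inr ⟨ha, hc⟩]

theorem ceNumbering_collapse {S : Set ℕ} (hS : CEIn ∅ S) : CENumbering (collapse S) := by
  obtain ⟨f, hf, rfl⟩ := exists_computable₂_of_ceIn_empty hS
  unfold CENumbering
  convert ceIn_empty_of_computable₂ (f := fun k n =>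
    k.unpair.1 == k.unpair.2 || f k.unpair.1 n.unpair.1 && f k.unpair.2 n.unpair.2) ?_ using 1
  · ext k
    simp only [collapse, Set.mem_ofPred_eq, Bool.or_eq_true, Bool.and_eq_true, beq_iff_eq]
    constructor
    · rintro (h | ⟨⟨s, hs⟩, ⟨t, ht⟩⟩)
      exacts [⟨0, Or.inl h⟩, ⟨Nat.pair s t, Or.inr (by simp [hs, ht])⟩]
    · rintro ⟨n, h | ⟨hs, ht⟩⟩
      exacts [Or.inl h, Or.inr ⟨⟨_, hs⟩, ⟨_, ht⟩⟩]
  · have hk₁ : Computable fun p : ℕ × ℕ => p.1.unpair.1 :=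
      (Primrec.fst.comp <| Primrec.unpair.comp Primrec.fst).to_comp
    have hk₂ : Computable fun p : ℕ × ℕ => p.1.unpair.2 :=
      (Primrec.snd.comp <| Primrec.unpair.comp Primrec.fst).to_comp
    have hn₁ : Computable fun p : ℕ × ℕ => p.2.unpair.1 :=
      (Primrec.fst.comp <| Primrec.unpair.comp Primrec.snd).to_comp
    have hn₂ : Computable fun p : ℕ × ℕ => p.2.unpair.2 :=
      (Primrec.snd.comp <| Primrec.unpair.comp Primrec.snd).to_comp
    exact (Primrec.or.to_comp.comp₂ (Primrec.beq.to_comp.comp₂ hk₁ hk₂)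
      (Primrec.and.to_comp.comp₂ (hf.comp₂ hk₁ hn₁) (hf.comp₂ hk₂ hn₂)))

theorem exists_pairwise_not_collapse {S : Set ℕ} (hS : Sᶜ.Infinite) (n : ℕ) :
    ∃ x : Fin n → ℕ, ∀ i j, i ≠ j → ¬ collapse S (x i) (x j) := by
  refine ⟨fun i => hS.natEmbedding _ i, fun i j hij h => ?_⟩
  rcases h with h | ⟨hi, -⟩
  · exact hij (Fin.ext ((hS.natEmbedding _).injective (Subtype.coe_injective h)))
  · exact (hS.natEmbedding _ i).2 hi

theorem DivisibleOmega.exists_computable_pairwise_not_rel {γ : ℕ → ℕ → Prop}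
    (hrefl : ∀ a, γ a a) (h : DivisibleOmega γ ∅) :
    ∃ x : ℕ → ℕ, Computable x ∧ ∀ i j, i ≠ j → ¬ γ (x i) (x j) := by
  obtain ⟨x, X, hx, -, hsub, hdisj⟩ := h
  exact ⟨x, computable_of_computableInSet_empty hx, fun i j hij hγ =>
    (hdisj i j hij).subset ⟨hγ, hsub j (hrefl (x j))⟩⟩

theorem not_divisibleOmega_collapse {S : Set ℕ}
    (hS : ∀ X, CEIn ∅ X → X.Infinite → (S ∩ X).Nonempty) : ¬ DivisibleOmega (collapse S) ∅ := by
  intro hdiv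
  obtain ⟨x, hx, hpair⟩ := hdiv.exists_computable_pairwise_not_rel (collapse_refl S)
  have hinj : x.Injective := fun i j h => by_contra fun hij => hpair i j hij (Or.inl h)
  have hunique : ∃ i₀, ∀ i, x i ∈ S → i = i₀ := by
    by_cases h : ∃ i, x i ∈ S
    · obtain ⟨i₀, hi₀⟩ := h
      exact ⟨i₀, fun i hi => by_contra fun hne => hpair i i₀ hne (Or.inr ⟨hi, hi₀⟩)⟩
    · exact ⟨0, fun i hi => absurd ⟨i, hi⟩ h⟩
  obtain ⟨i₀, hi₀⟩ := hunique
  obtain ⟨_, hm, i, hi, rfl⟩ := hS _ (ceIn_empty_image_compl_singleton hx i₀)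
    ((Set.finite_singleton i₀).infinite_compl.image hinj.injOn)
  exact hi (hi₀ i hm)

/-- There exists a c.e. numbering with infinitely many equivalence
classes that is not `ω`-divisible. -/
theorem exists_ce_numbering_not_omega_divisible :
    ∃ γ : ℕ → ℕ → Prop, Equivalence γ ∧ CENumbering γ ∧
      (∀ n : ℕ, ∃ x : Fin n → ℕ, ∀ i j : Fin n, i ≠ j → ¬ γ (x i) (x j)) ∧
      ¬ DivisibleOmega γ ∅ := by
  obtain ⟨hce, hcompl, hsimple⟩ := isSimpleSet_postSet
  exact ⟨collapse postSet, collapse_equivalence postSet, ceNumbering_collapse hce,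
    exists_pairwise_not_collapse hcompl, not_divisibleOmega_collapse hsimple⟩
end
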